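/- arXiv:2201.08480 — 2 statements merged into one kernel-verified Lean document; each statement's English description precedes it below -/
import Mathlib

section
/- Let (A, ‖·‖) be a normed commutative ring. The set M(A) of all multiplicative seminorms on A that are bounded by ‖·‖ (i.e. functions |·| : A → ℝ≥0 with |0| = 0, |1| = 1, |a+b| ≤ |a| + |b|, |ab| = |a||b|, and |a| ≤ ‖a‖ for all a, b ∈ A), viewed as a subset of the product space ∏_{a ∈ A} [0, ‖a‖] with the product (pointwise convergence) topology, is compact. -/
/-!
Every seminorm bounded by `N` lies in the product `∏ₐ [0, N a]`, which is compact by Tychonoff,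
and each defining condition is a non-strict inequality or an equation between finitely many
coordinate evaluations, hence closed for the topology of pointwise convergence.
-/

section BerkovichSpectrum

variable {A : Type*} [Zero A] [One A] [Add A] [Mul A]

def berkovichSpectrum (N : A → ℝ) : Set (A → ℝ) :=
  {f | (∀ a, 0 ≤ f a) ∧ f 0 = 0 ∧ f 1 = 1 ∧ (∀ a b, f (a + b) ≤ f a + f b) ∧
    (∀ a b, f (a * b) = f a * f b) ∧ (∀ a, f a ≤ N a)}

theorem berkovichSpectrum_subset_Icc (N : A → ℝ) : berkovichSpectrum N ⊆ Set.Icc 0 N :=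
  fun _ ⟨hnonneg, _, _, _, _, hle⟩ => ⟨hnonneg, hle⟩

theorem isClosed_berkovichSpectrum (N : A → ℝ) : IsClosed (berkovichSpectrum N) := by
  simp only [berkovichSpectrum, Set.ofPred_and, Set.ofPred_forall]
  refine .inter (isClosed_iInter fun a => isClosed_le continuous_const (continuous_apply a)) <|
    .inter (isClosed_eq (continuous_apply 0) continuous_const) <|
    .inter (isClosed_eq (continuous_apply 1) continuous_const) <|
    .inter (isClosed_iInter fun a => isClosed_iInter fun b =>
      isClosed_le (continuous_apply _) ((continuous_apply a).add (continuous_apply b))) <|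
    .inter (isClosed_iInter fun a => isClosed_iInter fun b =>
      isClosed_eq (continuous_apply _) ((continuous_apply a).mul (continuous_apply b))) <|
    isClosed_iInter fun a => isClosed_le (continuous_apply a) continuous_const

theorem isCompact_berkovichSpectrum (N : A → ℝ) : IsCompact (berkovichSpectrum N) :=
  isCompact_Icc.of_isClosed_subset (isClosed_berkovichSpectrum N) (berkovichSpectrum_subset_Icc N)

end BerkovichSpectrum

theorem berkovich_spectrum_compact_general {A : Type*} [CommRing A]
    (N : A → ℝ) :
    IsCompact {f : A → ℝ |
      (∀ a : A, 0 ≤ f a) ∧ f 0 = 0 ∧ f 1 = 1 ∧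
      (∀ a b : A, f (a + b) ≤ f a + f b) ∧
      (∀ a b : A, f (a * b) = f a * f b) ∧
      (∀ a : A, f a ≤ N a)} :=
  isCompact_berkovichSpectrum N

/-- The Berkovich spectrum of a normed commutative ring: the set of bounded
multiplicative seminorms, viewed inside the space of functions `A → ℝ` with
the topology of pointwise convergence, is compact. -/
theorem berkovich_spectrum_compact {A : Type*} [CommRing A]
    (N : A → ℝ) (hN0 : ∀ a : A, 0 ≤ N a) (hN1 : N 1 ≥ 1)
    (hNtri : ∀ a b : A, N (a + b) ≤ N a + N b)
    (hNmul : ∀ a b : A, N (a * b) ≤ N a * N b) :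
    IsCompact {f : A → ℝ |
      (∀ a : A, 0 ≤ f a) ∧ f 0 = 0 ∧ f 1 = 1 ∧
      (∀ a b : A, f (a + b) ≤ f a + f b) ∧
      (∀ a b : A, f (a * b) = f a * f b) ∧
      (∀ a : A, f a ≤ N a)} :=
  berkovich_spectrum_compact_general N
end

section
/- Let z₁, z₂ ∈ ℂ and r₁ > 0, r₂ > 0 be real numbers. Let ν_{z₂,r₂} denote the probability measure on ℂ obtained as the image of the normalized Lebesgue measure on [0, 2π) under θ ↦ z₂ + r₂ e^{iθ} (the normalized arclength measure on the circle of center z₂ and radius r₂). Then ν_{z₂,r₂} of the closed disk {w ∈ ℂ : |w − z₁| ≤ r₁} is at most r₁/r₂. -/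
/-!
Write `ρ = r₁ / r₂`; for `ρ ≥ 1` the bound is trivial. Otherwise, by the law of cosines,
`z₂ + r₂ e^{iθ}` lies in the disk iff `r₂² + ‖c‖² - 2 r₂ ‖c‖ cos (θ - arg c) ≤ r₁²`, where
`c = z₁ - z₂`, and AM-GM turns this into `cos (θ - arg c) ≥ √(1 - ρ²) = cos (arcsin ρ)`.
So the admissible angles form, modulo `2π`, an arc of half-width `arcsin ρ ≤ π ρ / 2`
(Jordan's inequality) around `arg c`, whose normalized length is at most `ρ`.
-/

open MeasureTheory

open Real in
theorem Real.arcsin_le_pi_div_two_mul {x : ℝ} (hx₀ : 0 ≤ x) (hx₁ : x ≤ 1) :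
    arcsin x ≤ π / 2 * x := by
  have h := mul_le_sin (arcsin_nonneg.mpr hx₀) (arcsin_le_pi_div_two x)
  rw [sin_arcsin (by linarith) hx₁, div_mul_eq_mul_div, div_le_iff₀ pi_pos] at h
  linarith

namespace AddCircle

theorem norm_coe_le_of_cos_le {x δ : ℝ} (hδ₀ : 0 ≤ δ) (hcos : Real.cos δ ≤ Real.cos x) :
    ‖(x : AddCircle (2 * Real.pi))‖ ≤ δ := by
  set y := x - round ((2 * Real.pi)⁻¹ * x) * (2 * Real.pi)
  have hnorm : ‖(x : AddCircle (2 * Real.pi))‖ = |y| := norm_eq _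
  have hyπ : |y| ≤ Real.pi := by
    have := norm_le_half_period (2 * Real.pi) (x := x) Real.two_pi_pos.ne'
    rw [hnorm, abs_of_pos Real.two_pi_pos] at this
    linarith
  have hcosy : Real.cos |y| = Real.cos x := by
    rw [Real.cos_abs, Real.cos_sub_int_mul_two_pi]
  rw [hnorm]
  by_contra! hlt
  linarith [Real.cos_lt_cos_of_nonneg_of_le_pi hδ₀ hyπ hlt]

theorem volume_preimage_closedBall_inter_Ico {T : ℝ} [Fact (0 < T)] (x : AddCircle T) (ε : ℝ) :
    volume (((↑) : ℝ → AddCircle T) ⁻¹' Metric.closedBall x ε ∩ Set.Ico 0 T)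
      = ENNReal.ofReal (min T (2 * ε)) := by
  rw [← volume_closedBall, add_projection_respects_measure T 0
    Metric.isClosed_closedBall.measurableSet, zero_add]
  exact measure_congr ((Filter.EventuallyEq.refl _ _).inter Ico_ae_eq_Ioc)

end AddCircle

namespace Complex

theorem norm_ofReal_mul_exp_sub_sq (r θ : ℝ) (c : ℂ) :
    ‖(r : ℂ) * exp (θ * I) - c‖ ^ 2 = r ^ 2 + ‖c‖ ^ 2 - 2 * r * ‖c‖ * Real.cos (θ - arg c) := by
  have hrot : (r : ℂ) * exp (θ * I) - c
      = exp (arg c * I) * ((r : ℂ) * exp (↑(θ - arg c) * I) - ‖c‖) := by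
    rw [mul_sub, ← mul_assoc, mul_comm (exp _), mul_assoc, ← exp_add, mul_comm (exp _),
      norm_mul_exp_arg_mul_I]
    push_cast
    ring_nf
  rw [hrot, norm_mul, norm_exp_ofReal_mul_I, one_mul, Complex.sq_norm, normSq_apply, exp_mul_I]
  simp only [← ofReal_cos, ← ofReal_sin, sub_re, sub_im, mul_re, mul_im, ofReal_re, ofReal_im,
    add_re, add_im, I_re, I_im]
  nlinarith [Real.sin_sq_add_cos_sq (θ - arg c)]

variable {r ρ θ : ℝ} {c : ℂ}

theorem sqrt_one_sub_sq_le_cos_sub_arg_of_norm_sub_le (hr : 0 < r) (hρ : ρ < 1)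
    (h : ‖(r : ℂ) * exp (θ * I) - c‖ ≤ ρ * r) :
    √(1 - ρ ^ 2) ≤ Real.cos (θ - arg c) := by
  have hρ₀ : 0 ≤ ρ := nonneg_of_mul_nonneg_left ((norm_nonneg _).trans h) hr
  have hsq := norm_ofReal_mul_exp_sub_sq r θ c ▸ pow_le_pow_left₀ (norm_nonneg _) h 2
  set s := √(1 - ρ ^ 2)
  have hs : s ^ 2 = 1 - ρ ^ 2 := Real.sq_sqrt (by nlinarith)
  have hc : 0 < ‖c‖ := by
    by_contra! hc
    rw [norm_le_zero_iff.mp hc, norm_zero] at hsq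
    nlinarith [mul_lt_mul_of_pos_right hρ hr, mul_nonneg hρ₀ hr.le]
  have : 2 * r * ‖c‖ * s ≤ 2 * r * ‖c‖ * Real.cos (θ - arg c) := by
    nlinarith [sq_nonneg (r * s - ‖c‖)]
  exact le_of_mul_le_mul_left this (by positivity)

theorem mem_closedBall_arg_arcsin_of_norm_sub_le (hr : 0 < r) (hρ : ρ < 1)
    (h : ‖(r : ℂ) * exp (θ * I) - c‖ ≤ ρ * r) :
    (θ : AddCircle (2 * Real.pi)) ∈ Metric.closedBall (arg c : AddCircle (2 * Real.pi))
      (Real.arcsin ρ) := by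
  have hρ₀ : 0 ≤ ρ := nonneg_of_mul_nonneg_left ((norm_nonneg _).trans h) hr
  rw [Metric.mem_closedBall, dist_eq_norm, ← AddCircle.coe_sub]
  refine AddCircle.norm_coe_le_of_cos_le (Real.arcsin_nonneg.mpr hρ₀) ?_
  rw [Real.cos_arcsin]
  exact sqrt_one_sub_sq_le_cos_sub_arg_of_norm_sub_le hr hρ h

theorem volume_setOf_norm_ofReal_mul_exp_sub_le_inter_Ico_le (c : ℂ) (hr : 0 < r)
    (hρ : 0 ≤ ρ) :
    volume ({θ : ℝ | ‖(r : ℂ) * exp (θ * I) - c‖ ≤ ρ * r} ∩ Set.Ico 0 (2 * Real.pi))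
      ≤ ENNReal.ofReal (2 * Real.pi * ρ) := by
  have hπ := Real.pi_pos
  rcases le_or_gt 1 ρ with hρ₁ | hρ₁
  · calc _ ≤ volume (Set.Ico 0 (2 * Real.pi)) := measure_mono Set.inter_subset_right
      _ = ENNReal.ofReal (2 * Real.pi) := by rw [Real.volume_Ico, sub_zero]
      _ ≤ _ := ENNReal.ofReal_le_ofReal (by nlinarith)
  · have : Fact (0 < 2 * Real.pi) := ⟨Real.two_pi_pos⟩
    calc _ ≤ volume (((↑) : ℝ → AddCircle (2 * Real.pi)) ⁻¹'
            Metric.closedBall (arg c : AddCircle (2 * Real.pi)) (Real.arcsin ρ) ∩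
              Set.Ico 0 (2 * Real.pi)) :=
          measure_mono (Set.inter_subset_inter_left _ fun _ hθ =>
            mem_closedBall_arg_arcsin_of_norm_sub_le hr hρ₁ hθ)
      _ = ENNReal.ofReal (min (2 * Real.pi) (2 * Real.arcsin ρ)) :=
          AddCircle.volume_preimage_closedBall_inter_Ico _ _
      _ ≤ _ := ENNReal.ofReal_le_ofReal <| (min_le_right _ _).trans <| by
          nlinarith [Real.arcsin_le_pi_div_two_mul hρ hρ₁.le]

end Complex

/-- The uniform probability measure on the circle of center `z₂` and radius
`r₂` gives mass at most `r₁ / r₂` to the closed disk of center `z₁` and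
radius `r₁`. -/
theorem circle_measure_closed_disk_le (z₁ z₂ : ℂ) (r₁ r₂ : ℝ)
    (hr₁ : 0 < r₁) (hr₂ : 0 < r₂) :
    (Measure.map (fun θ : ℝ => z₂ + (r₂ : ℂ) * Complex.exp ((θ : ℂ) * Complex.I))
        ((ENNReal.ofReal (2 * Real.pi))⁻¹ • volume.restrict (Set.Ico 0 (2 * Real.pi))))
      {w : ℂ | ‖w - z₁‖ ≤ r₁} ≤ ENNReal.ofReal (r₁ / r₂) := by
  have hf : Measurable fun θ : ℝ => z₂ + (r₂ : ℂ) * Complex.exp ((θ : ℂ) * Complex.I) := by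
    fun_prop
  have hD : MeasurableSet {w : ℂ | ‖w - z₁‖ ≤ r₁} :=
    (isClosed_le (by fun_prop) continuous_const).measurableSet
  have hpre : (fun θ : ℝ => z₂ + (r₂ : ℂ) * Complex.exp ((θ : ℂ) * Complex.I)) ⁻¹'
      {w : ℂ | ‖w - z₁‖ ≤ r₁}
      = {θ : ℝ | ‖(r₂ : ℂ) * Complex.exp (θ * Complex.I) - (z₁ - z₂)‖ ≤ r₁ / r₂ * r₂} := by
    ext θ
    rw [Set.mem_preimage, Set.mem_ofPred_eq, Set.mem_ofPred_eq, div_mul_cancel₀ _ hr₂.ne']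
    ring_nf
  rw [Measure.map_apply hf hD, Measure.smul_apply, Measure.restrict_apply (hf hD), smul_eq_mul,
    hpre]
  calc _ ≤ (ENNReal.ofReal (2 * Real.pi))⁻¹ * ENNReal.ofReal (2 * Real.pi * (r₁ / r₂)) := by
        gcongr
        exact Complex.volume_setOf_norm_ofReal_mul_exp_sub_le_inter_Ico_le _ hr₂ (by positivity)
    _ = ENNReal.ofReal (r₁ / r₂) := by
        rw [ENNReal.ofReal_mul Real.two_pi_pos.le, ← mul_assoc, ENNReal.inv_mul_cancel
          (ENNReal.ofReal_pos.mpr Real.two_pi_pos).ne' ENNReal.ofReal_ne_top, one_mul]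
end
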